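/- arXiv:1205.3776 — 5 statements merged into one kernel-verified Lean document; each statement's English description precedes it below -/
import Mathlib

section
/- The 10 degree-3 equations vanish on all trifocal tensors: for every triple of complex 3×4 matrices A₁, A₂, A₃ with associated trifocal tensor T, and for every x ∈ ℂ³, the 3×3 matrix M^C_x(T) with (i,j)-entry ∑ₖ xₖ T(i,j,k) has determinant zero. -/
open MvPolynomial Matrix

noncomputable section

/-- Tensors in `ℂ³ ⊗ ℂ³ ⊗ ℂ³`, given by their 27 entries. -/
abbrev Tensor : Type := Fin 3 × Fin 3 × Fin 3 → ℂ

/-- The polynomial ring in the 27 tensor entries. -/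
abbrev R : Type := MvPolynomial (Fin 3 × Fin 3 × Fin 3) ℂ

/-- The trifocal tensor associated to three camera matrices `A₁, A₂, A₃`:
`T (i,j,k)` is the determinant of the 4×4 matrix whose rows are the `i`-th row of `A₁`,
the `j`-th row of `A₂`, and the two rows of `A₃` with index different from `k`,
in increasing order of index. -/
def trifocalTensor (A₁ A₂ A₃ : Matrix (Fin 3) (Fin 4) ℂ) : Tensor := fun p =>
  (Matrix.of ![A₁ p.1, A₂ p.2.1, A₃ (p.2.2.succAbove 0), A₃ (p.2.2.succAbove 1)]).det

/-- The set of all trifocal tensors. -/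
def TT : Set Tensor :=
  {T | ∃ A₁ A₂ A₃ : Matrix (Fin 3) (Fin 4) ℂ, trifocalTensor A₁ A₂ A₃ = T}

/-- `I(X)_d`: the ℂ-vector space of polynomials homogeneous of degree `d`
vanishing at every trifocal tensor. -/
def IX (d : ℕ) : Submodule ℂ R :=
  MvPolynomial.homogeneousSubmodule (Fin 3 × Fin 3 × Fin 3) ℂ d ⊓
    (MvPolynomial.vanishingIdeal ℂ TT).restrictScalars ℂ

/-- `M^C_x(T)`: the 3×3 matrix with `(i,j)`-entry `∑ₖ xₖ T (i,j,k)`. -/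
def MC (x : Fin 3 → ℂ) (T : Tensor) : Matrix (Fin 3) (Fin 3) ℂ :=
  Matrix.of fun i j => ∑ k, x k * T (i, j, k)

/-- `M^B_y(T)`: the 3×3 matrix with `(i,k)`-entry `∑ⱼ yⱼ T (i,j,k)`. -/
def MB (y : Fin 3 → ℂ) (T : Tensor) : Matrix (Fin 3) (Fin 3) ℂ :=
  Matrix.of fun i k => ∑ j, y j * T (i, j, k)

/-- `M^A_z(T)`: the 3×3 matrix with `(j,k)`-entry `∑ᵢ zᵢ T (i,j,k)`. -/
def MA (z : Fin 3 → ℂ) (T : Tensor) : Matrix (Fin 3) (Fin 3) ℂ :=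
  Matrix.of fun j k => ∑ i, z i * T (i, j, k)

/-- The variety `P-Rank^{2,2,2}` of tensors all of whose three projections are
everywhere singular. -/
def PRank222 : Set Tensor :=
  {T | (∀ z, (MA z T).det = 0) ∧ (∀ y, (MB y T).det = 0) ∧ (∀ x, (MC x T).det = 0)}

/-- The action of `GL₃(ℂ)³` on tensors. -/
def act (g₁ g₂ g₃ : GL (Fin 3) ℂ) (T : Tensor) : Tensor := fun p =>
  ∑ i', ∑ j', ∑ k',
    (g₁ : Matrix (Fin 3) (Fin 3) ℂ) p.1 i' *
      (g₂ : Matrix (Fin 3) (Fin 3) ℂ) p.2.1 j' *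
        (g₃ : Matrix (Fin 3) (Fin 3) ℂ) p.2.2 k' * T (i', j', k')

/-- The Zariski closure of a set of tensors: the zero locus of its vanishing ideal. -/
def zariskiClosure (S : Set Tensor) : Set Tensor :=
  MvPolynomial.zeroLocus ℂ (MvPolynomial.vanishingIdeal ℂ S)

/-- The Levi-Civita (alternating) tensor `ε`. -/
def eps : Tensor := fun p =>
  if p = (0, 1, 2) ∨ p = (1, 2, 0) ∨ p = (2, 0, 1) then 1
  else if p = (0, 2, 1) ∨ p = (1, 0, 2) ∨ p = (2, 1, 0) then -1
  else 0

/-- The `GL₃(ℂ)³`-orbit of the Levi-Civita tensor. -/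
def epsOrbit : Set Tensor :=
  {T | ∃ g₁ g₂ g₃ : GL (Fin 3) ℂ, act g₁ g₂ g₃ eps = T}

/-- `Sub_{2,3,3}`: tensors annihilated in the first factor by a nonzero covector. -/
def Sub233 : Set Tensor :=
  {T | ∃ l : Fin 3 → ℂ, l ≠ 0 ∧ ∀ j k, ∑ i, l i * T (i, j, k) = 0}

/-- `Sub_{3,2,3}`: tensors annihilated in the second factor by a nonzero covector. -/
def Sub323 : Set Tensor :=
  {T | ∃ m : Fin 3 → ℂ, m ≠ 0 ∧ ∀ i k, ∑ j, m j * T (i, j, k) = 0}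

/-- The normal form `T₀` of a general trifocal tensor (0-indexed entries
`(0,1,0), (2,0,0), (1,1,1), (2,2,2)` equal to `1`). -/
def T₀ : Tensor := fun p =>
  if p = (0, 1, 0) ∨ p = (2, 0, 0) ∨ p = (1, 1, 1) ∨ p = (2, 2, 2) then 1 else 0

/-- The 3×9 flattening of a tensor in the first index. -/
def flatten1 (T : Tensor) : Matrix (Fin 3) (Fin 3 × Fin 3) ℂ :=
  Matrix.of fun i q => T (i, q.1, q.2)

/-- The 3×9 flattening of a tensor in the second index. -/
def flatten2 (T : Tensor) : Matrix (Fin 3) (Fin 3 × Fin 3) ℂ :=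
  Matrix.of fun j q => T (q.1, j, q.2)

/-- The 3×9 flattening of a tensor in the third index. -/
def flatten3 (T : Tensor) : Matrix (Fin 3) (Fin 3 × Fin 3) ℂ :=
  Matrix.of fun k q => T (q.1, q.2, k)

/-!
Bordering the rows of `A₃` by the signed coordinates `(x₀, -x₁, x₂)` and those of `A₁`, `A₂`
by `0`, Laplace expansion along the border column shows that the `(i,j)`-entry of
`M^C_x(T)` is the 5×5 determinant `det [aᵢ; bⱼ; ρ₀; ρ₁; ρ₂]` of the bordered rows.
As a function of `bⱼ` this is a linear map `ℂ⁵ → ℂ³` vanishing on the span of the `ρₖ`;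
if they are independent its range has dimension at most `2`, so the three columns of
`M^C_x(T)` are dependent, and otherwise every entry vanishes.
-/

section

variable {K : Type*}

open Module

theorem det_cons_zero_cons_zero_cons [CommRing K] {p : ℕ} (w z : Fin (p + 2) → K)
    (s : Fin (p + 1) → K) (c : Fin (p + 1) → Fin (p + 2) → K) :
    (of (Fin.cons (Fin.cons 0 w) (Fin.cons (Fin.cons 0 z) fun k => Fin.cons (s k) (c k)) :
        Matrix (Fin (p + 3)) (Fin (p + 3)) K)).det =
      ∑ k : Fin (p + 1),
        (-1) ^ (k : ℕ) * s k * (of (Fin.cons w (Fin.cons z (c ∘ k.succAbove)))).det := by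
  rw [det_succ_column_zero, Fin.sum_univ_succ, Fin.sum_univ_succ]
  simp only [of_apply, Fin.cons_zero, Fin.cons_succ, mul_zero, zero_mul, zero_add, Fin.val_succ,
    pow_succ, mul_neg_one, neg_neg]
  refine Finset.sum_congr rfl fun k _ => congrArg _ (congrArg det ?_)
  ext i j
  refine Fin.cases ?_ (fun i => Fin.cases ?_ (fun i => ?_) i) i <;> simp

theorem finrank_range_add_card_le_of_linearIndependent [Field K] {V W ι : Type*}
    [AddCommGroup V] [Module K V] [FiniteDimensional K V] [AddCommGroup W] [Module K W] [Fintype ι]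
    (L : V →ₗ[K] W) {c : ι → V} (hc : LinearIndependent K c) (hLc : ∀ k, L (c k) = 0) :
    finrank K (LinearMap.range L) + Fintype.card ι ≤ finrank K V := by
  have hspan : Submodule.span K (Set.range c) ≤ LinearMap.ker L :=
    Submodule.span_le.2 (Set.range_subset_iff.2 hLc)
  have := Submodule.finrank_mono hspan
  rw [finrank_span_eq_card hc] at this
  have := L.finrank_range_add_finrank_ker
  omega

theorem det_of_apply_eq_zero_of_finrank_range_lt [Field K] {V ι : Type*} [AddCommGroup V]
    [Module K V] [Fintype ι] [DecidableEq ι] (L : V →ₗ[K] ι → K)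
    (hL : finrank K (LinearMap.range L) < Fintype.card ι) (b : ι → V) :
    (of fun i j => L (b j) i).det = 0 := by
  by_contra hdet
  have hcols : Submodule.span K (Set.range (of fun i j => L (b j) i).col) ≤ LinearMap.range L :=
    Submodule.span_le.2 (Set.range_subset_iff.2 fun j => ⟨b j, rfl⟩)
  have := Submodule.finrank_mono hcols
  rw [← rank_eq_finrank_span_cols, rank_of_det_ne_zero hdet] at this
  omega

theorem det_of_det_cons_cons_eq_zero [Field K] {ι : Type*} [Fintype ι] [DecidableEq ι] {m : ℕ}
    (hι : 2 < Fintype.card ι) (a b : ι → Fin (m + 2) → K) (c : Fin m → Fin (m + 2) → K) :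
    (of fun i j => (of (Fin.cons (a i) (Fin.cons (b j) c))).det).det = 0 := by
  by_cases hc : LinearIndependent K c
  · let L : (Fin (m + 2) → K) →ₗ[K] ι → K := LinearMap.pi fun i =>
      (detRowAlternating : (Fin (m + 2) → K) [⋀^Fin (m + 2)]→ₗ[K] K).toMultilinearMap.toLinearMap
        (Fin.cons (a i) (Fin.cons 0 c)) 1
    have hL : ∀ z i, L z i = (of (Fin.cons (a i) (Fin.cons z c))).det := by
      intro z i
      simp only [L, LinearMap.pi_apply, MultilinearMap.toLinearMap_apply]
      rw [show (1 : Fin (m + 2)) = Fin.succ 0 from rfl, ← Fin.cons_update, Fin.update_cons_zero]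
      rfl
    have hLc : ∀ k, L (c k) = 0 := fun k => funext fun i => by
      rw [hL]
      exact det_zero_of_row_eq (i := 1) (j := k.succ.succ)
        ((Fin.succ_injective _).ne (Fin.succ_ne_zero k).symm) rfl
    have hrange := finrank_range_add_card_le_of_linearIndependent L hc hLc
    simp only [finrank_fin_fun, Fintype.card_fin] at hrange
    simp only [← hL]
    exact det_of_apply_eq_zero_of_finrank_range_lt L (by omega) b
  · have hdep (i j) : (of (Fin.cons (a i) (Fin.cons (b j) c))).det = 0 :=
      det_eq_zero_of_not_linearIndependent_rows fun h =>
        hc ((h.comp _ (Fin.succ_injective _)).comp _ (Fin.succ_injective _))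
    simp only [hdep]
    have : Nonempty ι := Fintype.card_pos_iff.1 (by omega)
    exact det_zero

end

theorem MC_trifocalTensor_eq_of_det (A₁ A₂ A₃ : Matrix (Fin 3) (Fin 4) ℂ) (x : Fin 3 → ℂ) :
    MC x (trifocalTensor A₁ A₂ A₃) = of fun i j => (of (Fin.cons (Fin.cons 0 (A₁ i))
      (Fin.cons (Fin.cons 0 (A₂ j)) fun k => Fin.cons ((-1) ^ (k : ℕ) * x k) (A₃ k)))).det := by
  ext i j
  rw [MC, of_apply, of_apply]
  refine Eq.symm ((det_cons_zero_cons_zero_cons (A₁ i) (A₂ j) _ A₃).trans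
    (Finset.sum_congr rfl fun k _ => ?_))
  have hrows : ![A₁ i, A₂ j, A₃ (k.succAbove 0), A₃ (k.succAbove 1)] =
      Fin.cons (A₁ i) (Fin.cons (A₂ j) (A₃ ∘ k.succAbove)) := by
    ext r : 1
    fin_cases r <;> rfl
  rw [trifocalTensor, hrows, ← mul_assoc, ← mul_pow, neg_one_mul, neg_neg, one_pow, one_mul]

/-- The ten degree-3 equations vanish on all trifocal tensors. -/
theorem det_MC_trifocal_eq_zero (A₁ A₂ A₃ : Matrix (Fin 3) (Fin 4) ℂ) (x : Fin 3 → ℂ) :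
    (MC x (trifocalTensor A₁ A₂ A₃)).det = 0 := by
  rw [MC_trifocalTensor_eq_of_det]
  exact det_of_det_cons_cons_eq_zero (by simp) _ _ _
end
end

section
/- The Levi-Civita tensor ε is not contained in any of the other three irreducible components of the zero set of the cubics: ε ∉ Sub_{2,3,3}, ε ∉ Sub_{3,2,3}, and ε does not lie in the Zariski closure X of the set TT of trifocal tensors. -/
open MvPolynomial Matrix

noncomputable section

/-!
Contracting `ε` with a covector `l` in its first (or second) slot gives the cross-product
matrix of `l`, which vanishes only for `l = 0`; this excludes `Sub_{2,3,3}` and `Sub_{3,2,3}`.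

For the Zariski closure we exhibit a sextic vanishing on `TT` but not at `ε`: the determinant
of the matrix whose `k`-th row is the `k`-th row of the adjugate of the slice `T(·,·,k)`.
For `T = trifocalTensor A₁ A₂ A₃` with rows `aᵢ, bⱼ, cₖ`, the slice is the Gram matrix
`(ω(aᵢ, bⱼ))` of the decomposable 2-form `ω = [· · c' c'']` (with `[u v w x] = det4 u v w x`),
so by the Plücker relation its adjugate has rank one: `adj(T(·,·,k)) k l = βₖ αₖₗ` with
`α = pairBracketMatrix a c` independent of `b`. The Plücker relation also gives `α ν = 0` for
`νₗ = [aₗ c₀ c₁ c₂]`, which is generically nonzero, so `det α = 0` identically. For `ε` every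
slice is a cross-product matrix `±[eₖ]ₓ`, whose adjugate is `eₖ eₖᵀ`, so the sextic takes the
value `det 1 = 1`.
-/

theorem Matrix.det_fin_four {S : Type*} [CommRing S] (A : Matrix (Fin 4) (Fin 4) S) :
    A.det =
      A 0 0 * A 1 1 * A 2 2 * A 3 3 - A 0 0 * A 1 1 * A 2 3 * A 3 2
      - A 0 0 * A 1 2 * A 2 1 * A 3 3 + A 0 0 * A 1 2 * A 2 3 * A 3 1
      + A 0 0 * A 1 3 * A 2 1 * A 3 2 - A 0 0 * A 1 3 * A 2 2 * A 3 1
      - A 0 1 * A 1 0 * A 2 2 * A 3 3 + A 0 1 * A 1 0 * A 2 3 * A 3 2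
      + A 0 1 * A 1 2 * A 2 0 * A 3 3 - A 0 1 * A 1 2 * A 2 3 * A 3 0
      - A 0 1 * A 1 3 * A 2 0 * A 3 2 + A 0 1 * A 1 3 * A 2 2 * A 3 0
      + A 0 2 * A 1 0 * A 2 1 * A 3 3 - A 0 2 * A 1 0 * A 2 3 * A 3 1
      - A 0 2 * A 1 1 * A 2 0 * A 3 3 + A 0 2 * A 1 1 * A 2 3 * A 3 0
      + A 0 2 * A 1 3 * A 2 0 * A 3 1 - A 0 2 * A 1 3 * A 2 1 * A 3 0
      - A 0 3 * A 1 0 * A 2 1 * A 3 2 + A 0 3 * A 1 0 * A 2 2 * A 3 1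
      + A 0 3 * A 1 1 * A 2 0 * A 3 2 - A 0 3 * A 1 1 * A 2 2 * A 3 0
      - A 0 3 * A 1 2 * A 2 0 * A 3 1 + A 0 3 * A 1 2 * A 2 1 * A 3 0 := by
  rw [det_succ_row_zero]
  simp +decide only [det_fin_three, Fin.sum_univ_four, submatrix_apply,
    Fin.succAbove, if_true, if_false]
  simp only [Fin.succ_zero_eq_one, Fin.succ_one_eq_two, Fin.reduceSucc, Fin.castSucc_zero,
    Fin.castSucc_one, Fin.reduceCastSucc, Fin.coe_ofNat_eq_mod]
  ring

section Brackets

variable {S S' : Type*} [CommRing S] [CommRing S']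

def det4 (u v w x : Fin 4 → S) : S := (Matrix.of ![u, v, w, x]).det

theorem map_det4 (f : S →+* S') (u v w x : Fin 4 → S) :
    f (det4 u v w x) = det4 (f ∘ u) (f ∘ v) (f ∘ w) (f ∘ x) := by
  rw [det4, RingHom.map_det]
  congr 1
  ext i j
  fin_cases i <;> rfl

theorem det4_swap_23 (u v w x : Fin 4 → S) : det4 u w v x = -det4 u v w x := by
  simp only [det4, det_fin_four, of_apply, cons_val_zero, cons_val_one, cons_val]
  ring

theorem det4_swap_34 (u v w x : Fin 4 → S) : det4 u v x w = -det4 u v w x := by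
  simp only [det4, det_fin_four, of_apply, cons_val_zero, cons_val_one, cons_val]
  ring

theorem det4_mul_det4_sub_det4_mul_det4 (u₁ u₂ v₁ v₂ c d : Fin 4 → S) :
    det4 u₁ v₁ c d * det4 u₂ v₂ c d - det4 u₁ v₂ c d * det4 u₂ v₁ c d =
      det4 u₁ u₂ c d * det4 v₁ v₂ c d := by
  simp only [det4, det_fin_four, of_apply, cons_val_zero, cons_val_one, cons_val]
  ring

theorem det4_three_term (a₀ a₁ a₂ e c d : Fin 4 → S) :
    det4 a₁ a₂ c d * det4 a₀ e c d - det4 a₀ a₂ c d * det4 a₁ e c d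
      + det4 a₀ a₁ c d * det4 a₂ e c d = 0 := by
  linear_combination -(det4_mul_det4_sub_det4_mul_det4 a₀ a₁ a₂ e c d)

theorem adjugate_of_det4 (u v : Fin 3 → Fin 4 → S) (c d : Fin 4 → S) (i j : Fin 3) :
    adjugate (of fun i j => det4 (u i) (v j) c d) i j = (-1) ^ (j + i : ℕ) *
      (det4 (u (j.succAbove 0)) (u (j.succAbove 1)) c d *
        det4 (v (i.succAbove 0)) (v (i.succAbove 1)) c d) := by
  rw [adjugate_fin_succ_eq_det_submatrix, det_fin_two]
  simp only [submatrix_apply, of_apply]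
  rw [det4_mul_det4_sub_det4_mul_det4]

def pairBracketMatrix (a c : Fin 3 → Fin 4 → S) : Matrix (Fin 3) (Fin 3) S :=
  of fun k l => (-1) ^ (l + k : ℕ) *
    det4 (a (l.succAbove 0)) (a (l.succAbove 1)) (c (k.succAbove 0)) (c (k.succAbove 1))

theorem map_pairBracketMatrix (f : S →+* S') (a c : Fin 3 → Fin 4 → S) :
    f.mapMatrix (pairBracketMatrix a c) =
      pairBracketMatrix (fun i => f ∘ a i) (fun k => f ∘ c k) := by
  ext k l
  simp [pairBracketMatrix, map_det4]

theorem pairBracketMatrix_mulVec (a c : Fin 3 → Fin 4 → S) :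
    pairBracketMatrix a c *ᵥ (fun l => det4 (a l) (c 0) (c 1) (c 2)) = 0 := by
  ext k
  fin_cases k <;>
    simp +decide [pairBracketMatrix, mulVec, dotProduct, Fin.sum_univ_three, Fin.succAbove]
  · linear_combination det4_three_term (a 0) (a 1) (a 2) (c 0) (c 1) (c 2)
  · simp only [det4_swap_23 _ (c 1) (c 0) (c 2)]
    linear_combination det4_three_term (a 0) (a 1) (a 2) (c 1) (c 0) (c 2)
  · simp only [det4_swap_34 _ (c 0) (c 2) (c 1), det4_swap_23 _ (c 2) (c 0) (c 1), neg_neg]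
    linear_combination det4_three_term (a 0) (a 1) (a 2) (c 2) (c 0) (c 1)

theorem det_pairBracketMatrix (a c : Fin 3 → Fin 4 → S) : (pairBracketMatrix a c).det = 0 := by
  let G := mvPolynomialX (Fin 3 ⊕ Fin 3) (Fin 4) ℤ
  have hν : (fun l => det4 (G (.inl l)) (G (.inr 0)) (G (.inr 1)) (G (.inr 2))) ≠ 0 := by
    intro h
    -- specialise to `a₀ = e₀`, `cₖ = eₖ₊₁`, where the bracket `[a₀ c₀ c₁ c₂]` is `1`
    have := congrArg
      (eval fun p => (1 : Matrix (Fin 4) (Fin 4) ℤ) (Sum.elim (fun _ => 0) Fin.succ p.1) p.2)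
      (congrFun h 0)
    simp [G, det4, det_fin_four, one_apply] at this
  -- `det = 0` is a polynomial identity over `ℤ`: check it for generic vectors, where `ν ≠ 0`
  have hgen : (pairBracketMatrix (fun i => G (.inl i)) (fun k => G (.inr k))).det = 0 :=
    exists_mulVec_eq_zero_iff.1 ⟨_, hν, pairBracketMatrix_mulVec _ _⟩
  have := congrArg (eval₂Hom (Int.castRingHom S) fun p => Sum.elim a c p.1 p.2) hgen
  rw [RingHom.map_det, map_pairBracketMatrix, map_zero] at this
  simpa [G, Function.comp_def] using this

end Brackets

section SliceAdjugate

variable {S S' : Type*} [CommRing S] [CommRing S']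

def tensorSlice (T : Fin 3 × Fin 3 × Fin 3 → S) (k : Fin 3) : Matrix (Fin 3) (Fin 3) S :=
  of fun i j => T (i, j, k)

def sliceAdjugateDet (T : Fin 3 × Fin 3 × Fin 3 → S) : S :=
  (of fun k => (tensorSlice T k).adjugate k).det

theorem map_sliceAdjugateDet (f : S →+* S') (T : Fin 3 × Fin 3 × Fin 3 → S) :
    f (sliceAdjugateDet T) = sliceAdjugateDet (f ∘ T) := by
  rw [sliceAdjugateDet, RingHom.map_det]
  congr 1
  ext k l
  exact congrFun₂ (f.map_adjugate (tensorSlice T k)) k l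

theorem eval_sliceAdjugateDet_X (T : Fin 3 × Fin 3 × Fin 3 → S) :
    eval T (sliceAdjugateDet (X : _ → MvPolynomial (Fin 3 × Fin 3 × Fin 3) S)) =
      sliceAdjugateDet T := by
  rw [map_sliceAdjugateDet (eval T)]
  congr 1
  funext p
  exact eval_X p

variable (a b c : Fin 3 → Fin 4 → S)

theorem adjugate_tensorSlice_det4 (k : Fin 3) :
    (tensorSlice (fun p : Fin 3 × Fin 3 × Fin 3 =>
      det4 (a p.1) (b p.2.1) (c (p.2.2.succAbove 0)) (c (p.2.2.succAbove 1))) k).adjugate k =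
      fun l => det4 (b (k.succAbove 0)) (b (k.succAbove 1)) (c (k.succAbove 0))
        (c (k.succAbove 1)) * pairBracketMatrix a c k l := by
  funext l
  change adjugate (of fun i j => det4 (a i) (b j) (c (k.succAbove 0)) (c (k.succAbove 1))) k l = _
  rw [adjugate_of_det4, pairBracketMatrix, of_apply]
  ring

theorem sliceAdjugateDet_det4 :
    sliceAdjugateDet (fun p : Fin 3 × Fin 3 × Fin 3 =>
      det4 (a p.1) (b p.2.1) (c (p.2.2.succAbove 0)) (c (p.2.2.succAbove 1))) = 0 := by
  simp only [sliceAdjugateDet, adjugate_tensorSlice_det4, det_mul_column, det_pairBracketMatrix,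
    mul_zero]

end SliceAdjugate

theorem sliceAdjugateDet_eps : sliceAdjugateDet eps = 1 := by
  have rows : (of fun k => (tensorSlice eps k).adjugate k) = 1 := by
    ext k l
    fin_cases k <;> fin_cases l <;> simp [tensorSlice, adjugate_fin_three, eps]
  rw [sliceAdjugateDet, rows, det_one]

theorem sliceAdjugateDet_mem_vanishingIdeal_TT :
    sliceAdjugateDet (X : _ → R) ∈ vanishingIdeal ℂ TT := by
  rw [mem_vanishingIdeal_iff]
  rintro _ ⟨A₁, A₂, A₃, rfl⟩
  exact (eval_sliceAdjugateDet_X _).trans (sliceAdjugateDet_det4 A₁ A₂ A₃)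

theorem sum_mul_eps_fst (l : Fin 3 → ℂ) (i : Fin 3) :
    ∑ i', l i' * eps (i', i + 1, i + 2) = l i := by
  fin_cases i <;> simp [eps]

theorem sum_mul_eps_snd (m : Fin 3 → ℂ) (j : Fin 3) :
    ∑ j', m j' * eps (j + 2, j', j + 1) = m j := by
  fin_cases j <;> simp [eps]

/-- The Levi-Civita tensor is in none of the other three components of the zero set
of the cubics. -/
theorem eps_not_in_other_components :
    eps ∉ Sub233 ∧ eps ∉ Sub323 ∧ eps ∉ zariskiClosure TT := by
  refine ⟨?_, ?_, fun h => ?_⟩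
  · rintro ⟨l, hl, h⟩
    exact hl (funext fun i => (sum_mul_eps_fst l i).symm.trans (h _ _))
  · rintro ⟨m, hm, h⟩
    exact hm (funext fun j => (sum_mul_eps_snd m j).symm.trans (h _ _))
  · have : eval eps (sliceAdjugateDet X) = 0 := h _ sliceAdjugateDet_mem_vanishingIdeal_TT
    rw [eval_sliceAdjugateDet_X, sliceAdjugateDet_eps] at this
    exact one_ne_zero this
end
end

section
/- The normal form of Nurmiev's nilpotent orbit 17 lies in the closure of the orbit of the Levi-Civita tensor: the tensor N₁₇ with N₁₇(1,1,2) = N₁₇(1,2,1) = N₁₇(2,1,3) = N₁₇(2,3,1) = 1 and all other entries 0 belongs to the Zariski closure of {(g₁,g₂,g₃)·ε : g₁, g₂, g₃ ∈ GL₃(ℂ)}. -/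
open MvPolynomial Matrix

noncomputable section

/-- The normal form of Nurmiev's nilpotent orbit 17 (0-indexed nonzero entries
`(0,0,1), (0,1,0), (1,0,2), (1,2,0)`). -/
def N17 : Tensor := fun p =>
  if p = (0, 0, 1) ∨ p = (0, 1, 0) ∨ p = (1, 0, 2) ∨ p = (1, 2, 0) then 1 else 0

/-!
Acting on `ε` by `(g₁, g₂, g₃)`, with `g₁` sending `(e₀, e₁, e₂)` to `(t e₂, e₁, e₀)` and `g₂`, `g₃`
diagonal sign changes, gives `N17 + t • N17Direction` for every `t ≠ 0`.
A polynomial vanishing on the orbit therefore restricts to a univariate polynomial in `t` with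
infinitely many roots, so it vanishes identically, in particular at `t = 0`, i.e. at `N17`.
-/

theorem MvPolynomial.mem_zeroLocus_vanishingIdeal_of_infinite_line {σ K : Type*} [Field K]
    {S : Set (σ → K)} (x v : σ → K) (h : {t : K | x + t • v ∈ S}.Infinite) :
    x ∈ zeroLocus K (vanishingIdeal K S) := by
  intro f hf
  set q : Polynomial K := aeval (fun i => Polynomial.C (x i) + Polynomial.X * Polynomial.C (v i)) f
    with hq_def
  have hq : ∀ t, q.eval t = eval (x + t • v) f := by
    intro t
    rw [hq_def, aeval_def, polynomial_eval_eval₂, show (Polynomial.evalRingHom t).comp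
      (algebraMap K (Polynomial K)) = RingHom.id K from RingHom.ext fun _ => Polynomial.eval_C]
    simp only [Polynomial.eval_add, Polynomial.eval_mul, Polynomial.eval_C, Polynomial.eval_X]
    rfl
  have hq0 : q = 0 := Polynomial.eq_zero_of_infinite_isRoot q <| h.mono fun t ht => by
    simpa [hq] using (mem_vanishingIdeal_iff.mp hf) _ ht
  simpa [hq] using congrArg (Polynomial.eval 0) hq0

@[simp]
theorem Matrix.GeneralLinearGroup.coe_mkOfDetNeZero {n K : Type*} [Fintype n] [DecidableEq n]
    [Field K] (A : Matrix n n K) (h : A.det ≠ 0) :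
    (GeneralLinearGroup.mkOfDetNeZero A h : Matrix n n K) = A :=
  rfl

def N17Direction : Tensor := fun p =>
  if p = (2, 1, 2) then 1 else if p = (2, 2, 1) then -1 else 0

theorem N17_add_smul_N17Direction_mem_epsOrbit {t : ℂ} (ht : t ≠ 0) :
    N17 + t • N17Direction ∈ epsOrbit := by
  have h₁ : (!![0, 0, 1; 0, 1, 0; t, 0, 0] : Matrix (Fin 3) (Fin 3) ℂ).det ≠ 0 := by
    simp [det_fin_three, ht]
  have h₂ : (!![1, 0, 0; 0, -1, 0; 0, 0, 1] : Matrix (Fin 3) (Fin 3) ℂ).det ≠ 0 := by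
    simp [det_fin_three]
  have h₃ : (!![1, 0, 0; 0, 1, 0; 0, 0, -1] : Matrix (Fin 3) (Fin 3) ℂ).det ≠ 0 := by
    simp [det_fin_three]
  refine ⟨.mkOfDetNeZero _ h₁, .mkOfDetNeZero _ h₂, .mkOfDetNeZero _ h₃, funext fun p => ?_⟩
  fin_cases p <;> simp [act, eps, N17, N17Direction, Fin.sum_univ_three]

/-- Orbit 17 lies in the closure of the orbit of the Levi-Civita tensor. -/
theorem N17_mem_closure_epsOrbit : N17 ∈ zariskiClosure epsOrbit :=
  mem_zeroLocus_vanishingIdeal_of_infinite_line N17 N17Direction <|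
    (Set.finite_singleton (0 : ℂ)).infinite_compl.mono fun _ ht =>
      N17_add_smul_N17Direction_mem_epsOrbit ht
end
end

section
/- The set of trifocal tensors is invariant under the action of GL₃(ℂ)³: if T is a trifocal tensor and g₁, g₂, g₃ ∈ GL₃(ℂ), then the tensor (g₁,g₂,g₃)·T with entries ∑_{i',j',k'} (g₁)_{i i'} (g₂)_{j j'} (g₃)_{k k'} T(i',j',k') is also a trifocal tensor. -/
open MvPolynomial Matrix

noncomputable section

/-! Each entry of a trifocal tensor is a `4 × 4` determinant, linear in the row of `A₁` and in the
row of `A₂`, and alternating bilinear in the two rows of `A₃`. Hence `(g₁ A₁, g₂ A₂, N A₃)` has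
trifocal tensor `(g₁, g₂, Λ²N) · T`, where `Λ²N` is the matrix of `2 × 2` minors of `N` indexed by
complementary indices. Over `ℂ` every invertible `g₃` is `Λ²N` for some `N`, since `Λ²N` is a signed
transpose of `adjugate N` and a square root of `det g₃` rescales the adjugate as needed. -/

instance {R M N ι : Type*} [Semiring R] [AddCommMonoid M] [Module R M] [AddCommMonoid N]
    [Module R N] : IsZeroApply (M [⋀^ι]→ₗ[R] N) (ι → M) N where
  zero_apply _ := rfl

instance {R M N ι : Type*} [Semiring R] [AddCommMonoid M] [Module R M] [AddCommMonoid N]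
    [Module R N] : IsAddApply (M [⋀^ι]→ₗ[R] N) (ι → M) N where
  add_apply _ _ _ := rfl

-- Cauchy–Binet for a 2-form on three vectors.
theorem AlternatingMap.map_fin_two_sum_smul {R M N : Type*} [CommRing R] [AddCommGroup M]
    [Module R M] [AddCommGroup N] [Module R N]
    (ω : M [⋀^Fin 2]→ₗ[R] N) (P : Matrix (Fin 2) (Fin 3) R) (c : Fin 3 → M) :
    ω (fun a => ∑ q, P a q • c q) =
      ∑ k : Fin 3, (P.submatrix id k.succAbove).det • ω (c ∘ k.succAbove) := by
  have hdiag (q : Fin 3) : ω (fun a => c (![q, q] a)) = 0 :=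
    ω.map_eq_zero_of_eq (i := 0) (j := 1) _ rfl (by decide)
  have hswap (q q' : Fin 3) : ω (fun a => c (![q', q] a)) = -ω (fun a => c (![q, q'] a)) := by
    rw [← ω.map_swap (i := 0) (j := 1) _ (by decide)]
    congr 1; ext a; fin_cases a <;> rfl
  have hcomp (k : Fin 3) :
      ω (c ∘ k.succAbove) = ω (fun a => c (![k.succAbove 0, k.succAbove 1] a)) := by
    congr 1; ext a; fin_cases a <;> rfl
  have hexpand := ω.toMultilinearMap.map_sum (fun a q => P a q • c q)
  simp only [AlternatingMap.coe_multilinearMap, ω.map_smul_univ] at hexpand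
  rw [hexpand, ← (piFinTwoEquiv fun _ => Fin 3).symm.sum_comp, Fintype.sum_prod_type]
  simp only [piFinTwoEquiv_symm_apply, finZeroElim_eq_zero, zero_empty, Fin.cons_vecEmpty,
    Fin.cons_vecCons, Fin.prod_univ_two, cons_val_zero, cons_val_one, cons_val_fin_one,
    Fin.sum_univ_three, hdiag, smul_zero, zero_add, add_zero, hswap 0 1, hswap 0 2, hswap 1 2,
    smul_neg, det_fin_two, submatrix_apply, id_eq, Fin.succAbove, Fin.castSucc_zero,
    Fin.succ_zero_eq_one, Fin.castSucc_one, Fin.succ_one_eq_two, hcomp, Fin.reduceLT, ↓reduceIte]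
  module

/- The maximal minors of `N` are the entries of `adjugate N`, transposed and signed by
`(-1) ^ (k + k')`. With `Y = D gᵀ D` absorbing these signs, `N = c • adjugate Y` has
`adjugate N = (c ^ (n + 1) * det Y ^ n) • Y`, so it suffices that `c ^ (n + 1) = (det g ^ n)⁻¹`. -/
theorem Matrix.exists_det_submatrix_succAbove_eq {K : Type*} [Field K] [IsAlgClosed K] {n : ℕ}
    (g : Matrix (Fin (n + 2)) (Fin (n + 2)) K) (hg : g.det ≠ 0) :
    ∃ N : Matrix (Fin (n + 2)) (Fin (n + 2)) K,
      ∀ k k', (N.submatrix k.succAbove k'.succAbove).det = g k k' := by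
  set D : Matrix (Fin (n + 2)) (Fin (n + 2)) K := diagonal fun a => (-1) ^ (a : ℕ)
  have hD : D.det * D.det = 1 := by
    rw [← det_mul, diagonal_mul_diagonal]
    simp [← pow_add, ← two_mul, pow_mul]
  set Y := D * gᵀ * D
  have hY : Y.det = g.det := by
    rw [det_mul, det_mul, det_transpose]; linear_combination g.det * hD
  have hY_apply (k k' : Fin (n + 2)) : Y k' k = (-1) ^ (k + k' : ℕ) * g k k' := by
    simp only [Y, D, diagonal_mul, mul_diagonal, transpose_apply, pow_add]; ring
  obtain ⟨c, hc⟩ := IsAlgClosed.exists_pow_nat_eq (g.det ^ n)⁻¹ n.succ_pos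
  have hadj : adjugate (c • adjugate Y) = Y := by
    rw [adjugate_smul, adjugate_adjugate _ (by simp), smul_smul, Fintype.card_fin, hY]
    simp [hc, hg]
  refine ⟨c • adjugate Y, fun k k' => ?_⟩
  have h := adjugate_fin_succ_eq_det_submatrix (c • adjugate Y) k' k
  rw [hadj, hY_apply] at h
  exact (mul_left_cancel₀ (by simp) h).symm

theorem trifocalTensor_apply (A₁ A₂ A₃ : Matrix (Fin 3) (Fin 4) ℂ) (i j k : Fin 3) :
    trifocalTensor A₁ A₂ A₃ (i, j, k) =
      (detRowAlternating.curryLeft (A₁ i)).curryLeft (A₂ j) (A₃ ∘ k.succAbove) := by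
  have hrows : ![A₃ (k.succAbove 0), A₃ (k.succAbove 1)] = A₃ ∘ k.succAbove := by
    ext a; fin_cases a <;> rfl
  simp only [AlternatingMap.curryLeft_apply_apply, trifocalTensor, ← hrows]
  rfl

section

variable (A₁ A₂ A₃ : Matrix (Fin 3) (Fin 4) ℂ) (N : Matrix (Fin 3) (Fin 3) ℂ) (i j k : Fin 3)

theorem trifocalTensor_mul_fst :
    trifocalTensor (N * A₁) A₂ A₃ (i, j, k) =
      ∑ i', N i i' * trifocalTensor A₁ A₂ A₃ (i', j, k) := by
  simp only [trifocalTensor_apply, mul_apply_eq_vecMul, vecMul_eq_sum, map_sum, map_smul,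
    ← AlternatingMap.curryLeftLinearMap_apply, LinearMap.sum_apply, LinearMap.smul_apply,
    _root_.sum_apply, AlternatingMap.smul_apply, smul_eq_mul]

theorem trifocalTensor_mul_snd :
    trifocalTensor A₁ (N * A₂) A₃ (i, j, k) =
      ∑ j', N j j' * trifocalTensor A₁ A₂ A₃ (i, j', k) := by
  simp only [trifocalTensor_apply, mul_apply_eq_vecMul, vecMul_eq_sum, map_sum, map_smul,
    _root_.sum_apply, AlternatingMap.smul_apply, smul_eq_mul]

theorem trifocalTensor_mul_thd :
    trifocalTensor A₁ A₂ (N * A₃) (i, j, k) =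
      ∑ k', (N.submatrix k.succAbove k'.succAbove).det * trifocalTensor A₁ A₂ A₃ (i, j, k') := by
  have hrows : (N * A₃) ∘ k.succAbove = fun a => ∑ q, N (k.succAbove a) q • A₃ q := by
    funext a; exact vecMul_eq_sum _ _
  rw [trifocalTensor_apply, hrows]
  refine (AlternatingMap.map_fin_two_sum_smul _ (N.submatrix k.succAbove id) A₃).trans ?_
  simp only [trifocalTensor_apply, submatrix_submatrix, Function.comp_id, Function.id_comp,
    smul_eq_mul]

theorem trifocalTensor_mul (N₁ N₂ N₃ : Matrix (Fin 3) (Fin 3) ℂ) :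
    trifocalTensor (N₁ * A₁) (N₂ * A₂) (N₃ * A₃) (i, j, k) =
      ∑ i', ∑ j', ∑ k', N₁ i i' * N₂ j j' * (N₃.submatrix k.succAbove k'.succAbove).det *
        trifocalTensor A₁ A₂ A₃ (i', j', k') := by
  rw [trifocalTensor_mul_fst]
  simp_rw [trifocalTensor_mul_snd, trifocalTensor_mul_thd, Finset.mul_sum, mul_assoc]

end

/-- The set of trifocal tensors is invariant under the action of `GL₃(ℂ)³`. -/
theorem TT_invariant_under_GL (A₁ A₂ A₃ : Matrix (Fin 3) (Fin 4) ℂ)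
    (g₁ g₂ g₃ : GL (Fin 3) ℂ) :
    act g₁ g₂ g₃ (trifocalTensor A₁ A₂ A₃) ∈ TT := by
  obtain ⟨N, hN⟩ := exists_det_submatrix_succAbove_eq (g₃ : Matrix (Fin 3) (Fin 3) ℂ)
    (isUnits_det_units g₃).ne_zero
  refine ⟨(g₁ : Matrix (Fin 3) (Fin 3) ℂ) * A₁, (g₂ : Matrix (Fin 3) (Fin 3) ℂ) * A₂, N * A₃,
    funext fun ⟨i, j, k⟩ => ?_⟩
  rw [trifocalTensor_mul]
  simp only [hN, act]
end
end

section
/- The normal form T₀ of a general trifocal tensor is itself a trifocal tensor: there exist complex 3×4 matrices A₁, A₂, A₃ whose associated trifocal tensor equals the tensor T₀ with T₀(1,2,1) = T₀(3,1,1) = T₀(2,2,2) = T₀(3,3,3) = 1 and all other entries 0. -/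
open MvPolynomial Matrix

noncomputable section

/-! With the third camera normalized to `[I | 0]`, expanding the determinant along its two unit
rows leaves a 2×2 minor of the first two cameras:
`T (i, j, k) = (-1)^k (A₁ i k · A₂ j 3 - A₁ i 3 · A₂ j k)`.
If the last columns of `A₁` and `A₂` are the unit vectors `e₂` and `e₁`, this is linear in the
remaining entries of `A₁` and `A₂`, and they can be read off from `T₀`. -/

def stdCamera : Matrix (Fin 3) (Fin 4) ℂ := Matrix.of fun r => Pi.single r.castSucc 1

lemma trifocalTensor_stdCamera (A₁ A₂ : Matrix (Fin 3) (Fin 4) ℂ) (i j k : Fin 3) :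
    trifocalTensor A₁ A₂ stdCamera (i, j, k) = (-1) ^ (k : ℕ) *
      (A₁ i k.castSucc * A₂ j (Fin.last 3) - A₁ i (Fin.last 3) * A₂ j k.castSucc) := by
  fin_cases k <;>
    simp [trifocalTensor, stdCamera, det_succ_row_zero, Fin.sum_univ_succ, Fin.succAbove,
      Pi.single_apply] <;>
    ring

/-- The normal form `T₀` is itself a trifocal tensor. -/
theorem T0_is_trifocal :
    ∃ A₁ A₂ A₃ : Matrix (Fin 3) (Fin 4) ℂ, trifocalTensor A₁ A₂ A₃ = T₀ := by
  refine ⟨!![1, 0, 0, 0; 0, -1, 0, 0; 0, 0, 0, 1], !![-1, 0, 0, 0; 0, 0, 0, 1; 0, 0, -1, 0],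
    stdCamera, ?_⟩
  ext ⟨i, j, k⟩
  rw [trifocalTensor_stdCamera]
  fin_cases i <;> fin_cases j <;> fin_cases k <;> simp [T₀]
end
end
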